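/- Let H : ℝⁿ → ℝ be convex, twice continuously differentiable, and satisfy H(0) = 0, ∇H(0) = 0, and positive definiteness of the Hessian of H at 0 (i.e., ⟨v, D(∇H)(0) v⟩ > 0 for all v ≠ 0). Let J, R : ℝⁿ → ℝⁿˣⁿ be continuous, assigning to each x a skew-symmetric matrix J(x) and a symmetric positive definite matrix R(x) (i.e., vᵀ R(x) v > 0 for all v ≠ 0 and all x). Then the equilibrium x = 0 of the unforced port-Hamiltonian system is globally asymptotically attracting: every solution x : [t₀, ∞) → ℝⁿ of ẋ(t) = (J(x(t)) − R(x(t))) ∇H(x(t)) converges to 0, i.e., x(t) → 0 as t → ∞. -/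

import Mathlib

/-!
Along a solution, `H` is a Lyapunov function: the skew-symmetric part `J` does no work, so
`d/dt H(x t) = -⟪∇H, R ∇H⟫ ≤ 0`. Convexity together with the positive definite Hessian at the
critical point `0` makes `0` the unique zero of `H` and all sublevel sets of `H` compact. If
`H(x t)` stayed above some `δ > 0`, the solution would stay in the compact set `{δ ≤ H ≤ H(x t₀)}`,
on which `∇H` does not vanish, so the dissipation would be bounded below by a positive constant
and `H(x t)` would become negative. Hence `H(x t) → 0`, and compactness forces `x t → 0`.
-/

open Matrix RealInnerProductSpace Filter

/-- The gradient of a function on `ℝⁿ` (Euclidean space), via Mathlib's `gradient`. -/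
noncomputable def grad {n : ℕ} (H : EuclideanSpace ℝ (Fin n) → ℝ) :
    EuclideanSpace ℝ (Fin n) → EuclideanSpace ℝ (Fin n) := gradient H

open Set Topology

theorem image_sub_le_mul_sub_of_hasDerivAt_le_of_ge {f f' : ℝ → ℝ} {a C : ℝ}
    (hf : ∀ t ≥ a, HasDerivAt f (f' t) t) (hC : ∀ t ≥ a, f' t ≤ C) {s t : ℝ} (hs : a ≤ s)
    (hst : s ≤ t) : f t - f s ≤ C * (t - s) := by
  refine (convex_Ici a).image_sub_le_mul_sub_of_deriv_le
    (fun u hu => (hf u hu).continuousAt.continuousWithinAt) (fun u hu => ?_) (fun u hu => ?_)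
    s hs t (hs.trans hst) hst
  all_goals rw [interior_Ici] at hu
  · exact (hf u hu.le).differentiableAt.differentiableWithinAt
  · exact (hf u hu.le).deriv ▸ hC u hu.le

section Topology

variable {X : Type*} [TopologicalSpace X]

theorem IsCompact.exists_pos_forall_le {K : Set X} (hK : IsCompact K) {g : X → ℝ}
    (hg : ContinuousOn g K) (hpos : ∀ z ∈ K, 0 < g z) : ∃ m > 0, ∀ z ∈ K, m ≤ g z := by
  rcases K.eq_empty_or_nonempty with rfl | hne
  · exact ⟨1, one_pos, fun z hz => hz.elim⟩
  · obtain ⟨z₀, hz₀, hmin⟩ := hK.exists_isMinOn hne hg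
    exact ⟨g z₀, hpos z₀ hz₀, fun z hz => hmin hz⟩

theorem tendsto_nhds_of_tendsto_comp_nhds_zero {ι : Type*} {l : Filter ι} {V : X → ℝ}
    (hV : Continuous V) (hsub : IsCompact {z | V z ≤ 1}) {a : X} (ha : ∀ z, V z = 0 → z = a)
    {x : ι → X} (hx : Tendsto (fun i => V (x i)) l (𝓝 0)) : Tendsto x l (𝓝 a) := by
  refine hsub.tendsto_nhds_of_unique_mapClusterPt (hx.eventually (ge_mem_nhds one_pos))
    fun z _ hz => ha z ?_
  by_contra hne
  have hcl : ClusterPt (V z) (𝓝 0) :=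
    (mapClusterPt_def.1 (hz.tendsto_comp hV.continuousAt)).mono hx
  exact hcl.neBot.ne (disjoint_iff.1 (disjoint_nhds_nhds.2 hne))

theorem tendsto_zero_of_hasDerivAt_neg {V W : X → ℝ}
    (hV : Continuous V) (hW : Continuous W) (hV₀ : ∀ z, 0 ≤ V z) (hW₀ : ∀ z, 0 ≤ W z)
    (hWpos : ∀ z, 0 < V z → 0 < W z) (hsub : ∀ c, IsCompact {z | V z ≤ c})
    {x : ℝ → X} {t₀ : ℝ} (hx : ∀ t ≥ t₀, HasDerivAt (fun s => V (x s)) (-W (x t)) t) :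
    Tendsto (fun t => V (x t)) atTop (𝓝 0) := by
  have hanti : ∀ s t, t₀ ≤ s → s ≤ t → V (x t) ≤ V (x s) := fun s t hs hst => by
    have := image_sub_le_mul_sub_of_hasDerivAt_le_of_ge hx (C := 0)
      (fun t _ => neg_nonpos.2 (hW₀ (x t))) hs hst
    linarith
  have hsmall : ∀ δ > 0, ∃ t ≥ t₀, V (x t) < δ := by
    intro δ hδ
    by_contra! hbig
    have hxK : ∀ t ≥ t₀, x t ∈ {z | V z ≤ V (x t₀)} ∩ {z | δ ≤ V z} :=
      fun t ht => ⟨hanti t₀ t le_rfl ht, hbig t ht⟩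
    have hK : IsCompact ({z | V z ≤ V (x t₀)} ∩ {z | δ ≤ V z}) :=
      (hsub _).inter_right (isClosed_le continuous_const hV)
    obtain ⟨w, hw, hwK⟩ :=
      hK.exists_pos_forall_le hW.continuousOn fun z hz => hWpos z (hδ.trans_le hz.2)
    set T := t₀ + V (x t₀) / w + 1
    have hT : t₀ ≤ T := by have := div_nonneg (hV₀ (x t₀)) hw.le; linarith
    have hdecay := image_sub_le_mul_sub_of_hasDerivAt_le_of_ge hx (C := -w)
      (fun t ht => neg_le_neg (hwK _ (hxK t ht))) le_rfl hT
    have hwT : -w * (T - t₀) = -V (x t₀) - w := by simp only [T]; field_simp; ring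
    linarith [hbig T hT]
  refine tendsto_order.2 ⟨fun a ha => Eventually.of_forall fun t => ha.trans_le (hV₀ _),
    fun δ hδ => ?_⟩
  obtain ⟨t₁, ht₁, hδ₁⟩ := hsmall δ hδ
  filter_upwards [eventually_ge_atTop t₁] with t ht
  exact (hanti t₁ t ht₁ ht).trans_lt hδ₁

end Topology

theorem ConvexOn.isCompact_sublevel {E : Type*} [NormedAddCommGroup E] [NormedSpace ℝ E]
    [ProperSpace E] {f : E → ℝ} (hf : ConvexOn ℝ univ f) (hfc : Continuous f) (h₀ : f 0 = 0)
    (hpos : ∀ z, z ≠ 0 → 0 < f z) (c : ℝ) : IsCompact {z | f z ≤ c} := by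
  obtain ⟨m, hm, hmS⟩ := (isCompact_sphere (0 : E) 1).exists_pos_forall_le hfc.continuousOn
    fun u hu => hpos u (ne_zero_of_mem_sphere one_ne_zero ⟨u, hu⟩)
  have hgrowth : ∀ z, 1 ≤ ‖z‖ → m * ‖z‖ ≤ f z := by
    intro z hz
    have hz₀ : 0 < ‖z‖ := one_pos.trans_le hz
    have hu : ‖z‖⁻¹ • z ∈ Metric.sphere (0 : E) 1 := by simp [norm_smul, hz₀.ne']
    have hchord : f (‖z‖⁻¹ • z) ≤ ‖z‖⁻¹ * f z := by
      simpa [h₀] using hf.2 (mem_univ z) (mem_univ 0) (inv_nonneg.2 hz₀.le)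
        (sub_nonneg.2 (inv_le_one_of_one_le₀ hz)) (add_sub_cancel _ _)
    have := (hmS _ hu).trans hchord
    rwa [← div_eq_inv_mul, le_div_iff₀ hz₀] at this
  refine (isCompact_closedBall 0 (max 1 (c / m))).of_isClosed_subset
    (isClosed_le hfc continuous_const) fun z (hz : f z ≤ c) => ?_
  rw [mem_closedBall_zero_iff]
  rcases le_total ‖z‖ 1 with h | h
  · exact h.trans (le_max_left _ _)
  · exact le_max_of_le_right ((le_div_iff₀' hm).2 ((hgrowth z h).trans hz))

section InnerProductSpace

variable {F : Type*} [NormedAddCommGroup F] [InnerProductSpace ℝ F]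

theorem eventually_inner_apply_smul_pos {G : F → F} (hG : DifferentiableAt ℝ G 0)
    (hG₀ : G 0 = 0) {v : F} (hv : 0 < ⟪v, fderiv ℝ G 0 v⟫) :
    ∀ᶠ s in 𝓝[>] (0 : ℝ), 0 < ⟪G (s • v), v⟫ := by
  have hderiv : HasDerivAt (fun s : ℝ => ⟪G (s • v), v⟫) ⟪v, fderiv ℝ G 0 v⟫ 0 := by
    have hline : HasDerivAt (fun s : ℝ => s • v) v 0 := by
      simpa using (hasDerivAt_id (0 : ℝ)).smul_const v
    have := (hG.hasFDerivAt.comp_hasDerivAt_of_eq 0 hline (zero_smul ℝ v).symm).inner ℝ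
      (hasDerivAt_const 0 v)
    simpa [real_inner_comm] using this
  filter_upwards [hderiv.tendsto_slope_zero_right.eventually (lt_mem_nhds hv),
    self_mem_nhdsWithin] with s hs (hs₀ : 0 < s)
  simpa [hG₀, hs₀] using hs

variable [CompleteSpace F]

theorem ContDiff.gradient {f : F → ℝ} {m n : WithTop ℕ∞} (hf : ContDiff ℝ n f)
    (hmn : m + 1 ≤ n) : ContDiff ℝ m (gradient f) :=
  (InnerProductSpace.toDual ℝ F).symm.toContinuousLinearEquiv.contDiff.comp
    (hf.fderiv_right hmn)

theorem ConvexOn.add_inner_gradient_le {f : F → ℝ} (hf : ConvexOn ℝ univ f) {a : F}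
    (hfa : DifferentiableAt ℝ f a) (b : F) : f a + ⟪gradient f a, b - a⟫ ≤ f b := by
  have hline : HasDerivAt (f ∘ AffineMap.lineMap (k := ℝ) a b) ⟪gradient f a, b - a⟫ 0 := by
    rw [inner_gradient_left]
    exact hfa.hasFDerivAt.comp_hasDerivAt_of_eq 0 AffineMap.hasDerivAt_lineMap
      (AffineMap.lineMap_apply_zero a b).symm
  have := (hf.comp_affineMap (AffineMap.lineMap (k := ℝ) a b)).le_slope_of_hasDerivAt
    (mem_univ 0) (mem_univ 1) one_pos hline
  simp only [slope_def_field, Function.comp_apply, AffineMap.lineMap_apply_zero,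
    AffineMap.lineMap_apply_one, sub_zero, div_one] at this
  linarith

theorem ConvexOn.le_of_gradient_eq_zero {f : F → ℝ} (hf : ConvexOn ℝ univ f) {a : F}
    (hfa : DifferentiableAt ℝ f a) (h : gradient f a = 0) (b : F) : f a ≤ f b := by
  simpa [h] using hf.add_inner_gradient_le hfa b

theorem ConvexOn.pos_of_inner_fderiv_gradient_pos {f : F → ℝ} (hf : ConvexOn ℝ univ f)
    (hdf : Differentiable ℝ f) (h₀ : f 0 = 0) (hg₀ : gradient f 0 = 0)
    (hd : DifferentiableAt ℝ (gradient f) 0) {v : F}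
    (hv : 0 < ⟪v, fderiv ℝ (gradient f) 0 v⟫) : 0 < f v := by
  obtain ⟨s, hs, hs₀, hs₁⟩ :=
    ((eventually_inner_apply_smul_pos hd hg₀ hv).and (Ioo_mem_nhdsGT one_pos)).exists
  have hsupport := hf.add_inner_gradient_le (hdf (s • v)) v
  have hnonneg : 0 ≤ f (s • v) := h₀ ▸ hf.le_of_gradient_eq_zero (hdf 0) hg₀ _
  have hstep : 0 < ⟪gradient f (s • v), v - s • v⟫ := by
    rw [show v - s • v = (1 - s) • v by rw [sub_smul, one_smul], inner_smul_right]
    exact mul_pos (sub_pos.2 hs₁) hs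
  linarith

end InnerProductSpace

theorem Matrix.dotProduct_mulVec_eq_zero_of_transpose_eq_neg {n : Type*} [Fintype n]
    {M : Matrix n n ℝ} (hM : Mᵀ = -M) (v : n → ℝ) : v ⬝ᵥ M *ᵥ v = 0 := by
  have h : v ⬝ᵥ M *ᵥ v = -(v ⬝ᵥ M *ᵥ v) := by
    conv_lhs => rw [dotProduct_mulVec, ← mulVec_transpose, hM, neg_mulVec, neg_dotProduct,
      dotProduct_comm]
  linarith

theorem HasDerivAt.hamiltonian_comp {n : ℕ} {H : EuclideanSpace ℝ (Fin n) → ℝ}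
    {J R : Matrix (Fin n) (Fin n) ℝ} {x : ℝ → EuclideanSpace ℝ (Fin n)} {t : ℝ}
    (hx : HasDerivAt x (WithLp.toLp 2 ((J - R) *ᵥ grad H (x t))) t)
    (hH : DifferentiableAt ℝ H (x t)) (hJ : Jᵀ = -J) :
    HasDerivAt (fun s => H (x s)) (-(grad H (x t) ⬝ᵥ R *ᵥ grad H (x t))) t := by
  refine (hH.hasFDerivAt.comp_hasDerivAt t hx).congr_deriv ?_
  rw [← inner_gradient_left, EuclideanSpace.inner_eq_star_dotProduct, dotProduct_comm]
  simp [grad, sub_mulVec, dotProduct_mulVec_eq_zero_of_transpose_eq_neg hJ]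

theorem phs_equilibrium_globally_attracting_general {n : ℕ}
    (H : EuclideanSpace ℝ (Fin n) → ℝ)
    (hconv : ConvexOn ℝ Set.univ H)
    (hsmooth : ContDiff ℝ 2 H)
    (h0 : H 0 = 0)
    (hgrad0 : grad H 0 = 0)
    (hhess : ∀ v : EuclideanSpace ℝ (Fin n), v ≠ 0 → 0 < ⟪v, fderiv ℝ (grad H) 0 v⟫)
    (J R : EuclideanSpace ℝ (Fin n) → Matrix (Fin n) (Fin n) ℝ)
    (hRcont : Continuous R)
    (hJ : ∀ y, (J y)ᵀ = -(J y))
    (hRpd : ∀ y, ∀ v : Fin n → ℝ, v ≠ 0 → 0 < v ⬝ᵥ (R y).mulVec v)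
    (t₀ : ℝ) (x : ℝ → EuclideanSpace ℝ (Fin n))
    (hx : ∀ t : ℝ, t₀ ≤ t →
      HasDerivAt x (WithLp.toLp 2 ((J (x t) - R (x t)).mulVec (grad H (x t)))) t) :
    Tendsto x atTop (nhds 0) := by
  have hdiff : Differentiable ℝ H := hsmooth.differentiable (by norm_num)
  have hgrad : ContDiff ℝ 1 (grad H) := hsmooth.gradient (by norm_num)
  have hnonneg : ∀ z, 0 ≤ H z := fun z =>
    h0 ▸ hconv.le_of_gradient_eq_zero (hdiff 0) hgrad0 z
  have hpos : ∀ v, v ≠ 0 → 0 < H v := fun v hv =>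
    hconv.pos_of_inner_fderiv_gradient_pos hdiff h0 hgrad0 (hgrad.differentiable one_ne_zero 0)
      (hhess v hv)
  have hsub := hconv.isCompact_sublevel hsmooth.continuous h0 hpos
  have hdiss₀ : ∀ z, 0 ≤ grad H z ⬝ᵥ R z *ᵥ grad H z := fun z => by
    rcases eq_or_ne (grad H z) 0 with hz | hz
    · simp [hz]
    · exact (hRpd z _ (by simpa using hz)).le
  have hdiss : ∀ z, 0 < H z → 0 < grad H z ⬝ᵥ R z *ᵥ grad H z := fun z hz =>
    hRpd z _ fun hg => hz.not_ge <|
      h0 ▸ hconv.le_of_gradient_eq_zero (hdiff z) (show grad H z = 0 by simpa using hg) 0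
  have hlyap := tendsto_zero_of_hasDerivAt_neg hsmooth.continuous
    (by have := hgrad.continuous; fun_prop) hnonneg hdiss₀ hdiss hsub
    fun t ht => (hx t ht).hamiltonian_comp (hdiff _) (hJ _)
  exact tendsto_nhds_of_tendsto_comp_nhds_zero hsmooth.continuous (hsub 1)
    (fun z hz => by_contra fun hne => (hpos z hne).ne' hz) hlyap

/-- For a convex, twice continuously differentiable Hamiltonian `H`
with `H(0) = 0`, `∇H(0) = 0`, and positive definite Hessian at `0`, and continuous
`J`, `R` with `J(x)` skew-symmetric and `R(x)` symmetric positive definite, every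
solution of the unforced port-Hamiltonian system `ẋ = (J(x) - R(x)) ∇H(x)` on
`[t₀, ∞)` converges to `0` as `t → ∞`. -/
theorem phs_equilibrium_globally_attracting {n : ℕ}
    (H : EuclideanSpace ℝ (Fin n) → ℝ)
    (hconv : ConvexOn ℝ Set.univ H)
    (hsmooth : ContDiff ℝ 2 H)
    (h0 : H 0 = 0)
    (hgrad0 : grad H 0 = 0)
    (hhess : ∀ v : EuclideanSpace ℝ (Fin n), v ≠ 0 → 0 < ⟪v, fderiv ℝ (grad H) 0 v⟫)
    (J R : EuclideanSpace ℝ (Fin n) → Matrix (Fin n) (Fin n) ℝ)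
    (hJcont : Continuous J) (hRcont : Continuous R)
    (hJ : ∀ y, (J y)ᵀ = -(J y))
    (hRsym : ∀ y, (R y)ᵀ = R y)
    (hRpd : ∀ y, ∀ v : Fin n → ℝ, v ≠ 0 → 0 < v ⬝ᵥ (R y).mulVec v)
    (t₀ : ℝ) (x : ℝ → EuclideanSpace ℝ (Fin n))
    (hx : ∀ t : ℝ, t₀ ≤ t →
      HasDerivAt x (WithLp.toLp 2 ((J (x t) - R (x t)).mulVec (grad H (x t)))) t) :
    Tendsto x atTop (nhds 0) :=
  phs_equilibrium_globally_attracting_general H hconv hsmooth h0 hgrad0 hhess J R hRcont hJ hRpd t₀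
    x hx
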